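/- arXiv:2603.08904 — 3 statements merged into one kernel-verified Lean document; each statement's English description precedes it below -/
import Mathlib

section
/- Fix α ≥ 16 and define the unstable cone C_u = {(x,y) ∈ ℝ²: |y| ≤ 4|x|/√α}. Then for each of the four matrices A = [[1±α², ±α],[∓α,1]] and every nonzero v ∈ C_u, we have Av ∈ C_u and (α² - 10α^{3/2})|v| ≤ |Av| ≤ (α² + 10α^{3/2})|v|. -/
/-!
Write α = s² with s ≥ 4 and v = (x, y) with s|y| ≤ 4|x|. The first coordinate of Av is
±s⁴x up to an error of at most |x| + s²|y| ≤ (1 + 4s)|x|, and the second is at most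
s²|x| + |y| in absolute value, so Av stays in the cone. Since also |x| ≤ |v| ≤ |x| + |y|
≤ (1 + 4/s)|x|, both |v| and |Av| are comparable to |x|, resp. s⁴|x|, with relative errors
O(1/s), which the margin 10 s³ absorbs.
-/

open Real

lemma abs_le_sqrt_sq_add_sq (p q : ℝ) : |p| ≤ √(p ^ 2 + q ^ 2) :=
  abs_le_sqrt (le_add_of_nonneg_right (sq_nonneg q))

lemma sqrt_sq_add_sq_le_abs_add_abs (p q : ℝ) : √(p ^ 2 + q ^ 2) ≤ |p| + |q| :=
  sqrt_le_iff.mpr ⟨by positivity, by nlinarith [sq_abs p, sq_abs q, abs_nonneg p, abs_nonneg q]⟩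

section CoordinateBounds

variable {e f t : ℝ} (x y : ℝ)

lemma abs_first_coord_le (he : |e| ≤ 1) (hf : |f| ≤ 1) (ht : 0 ≤ t) :
    |(1 + e * t ^ 2) * x + f * t * y| ≤ (t ^ 2 + 1) * |x| + t * |y| := by
  calc |(1 + e * t ^ 2) * x + f * t * y| = |e * (t ^ 2 * x) + x + f * (t * y)| := by ring_nf
    _ ≤ |e| * (t ^ 2 * |x|) + |x| + |f| * (t * |y|) := by
        grw [abs_add_le, abs_add_le]
        simp only [abs_mul, abs_of_nonneg ht, abs_of_nonneg (sq_nonneg t), le_refl]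
    _ ≤ (t ^ 2 + 1) * |x| + t * |y| := by
        grw [he, hf]; linarith

lemma le_abs_first_coord (he : |e| = 1) (hf : |f| ≤ 1) (ht : 0 ≤ t) :
    (t ^ 2 - 1) * |x| - t * |y| ≤ |(1 + e * t ^ 2) * x + f * t * y| := by
  have key := abs_sub_abs_le_abs_sub (e * (t ^ 2 * x)) (-(x + f * (t * y)))
  have hxy : |x + f * (t * y)| ≤ |x| + t * |y| := by
    grw [abs_add_le, abs_mul, abs_mul, hf, abs_of_nonneg ht]; linarith
  rw [abs_neg, abs_mul, abs_mul, he, abs_of_nonneg (sq_nonneg t)] at key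
  calc (t ^ 2 - 1) * |x| - t * |y| ≤ 1 * (t ^ 2 * |x|) - |x + f * (t * y)| := by linarith
    _ ≤ |e * (t ^ 2 * x) - -(x + f * (t * y))| := key
    _ = |(1 + e * t ^ 2) * x + f * t * y| := by ring_nf

lemma abs_second_coord_le (he : |e| ≤ 1) (ht : 0 ≤ t) :
    |-(e * t * x) + y| ≤ t * |x| + |y| := by
  grw [abs_add_le, abs_neg, abs_mul, abs_mul, he, abs_of_nonneg ht, one_mul]

end CoordinateBounds

section ConeEstimates

variable {s x y a b : ℝ} (hs : 4 ≤ s) (hcone : s * |y| ≤ 4 * |x|)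
include hs hcone

lemma mul_abs_le_of_coord_bounds (ha : (s ^ 4 - 1) * |x| - s ^ 2 * |y| ≤ |a|)
    (hb : |b| ≤ s ^ 2 * |x| + |y|) : s * |b| ≤ 4 * |a| := by
  have hx := abs_nonneg x
  nlinarith [mul_nonneg hx (show 0 ≤ 4 * s ^ 4 - s ^ 3 - 16 * s - 8 by
    nlinarith [mul_le_mul_of_nonneg_left hs (by positivity : (0 : ℝ) ≤ s ^ 3)])]

lemma le_sqrt_of_coord_bounds (ha : (s ^ 4 - 1) * |x| - s ^ 2 * |y| ≤ |a|) :
    (s ^ 4 - 10 * s ^ 3) * √(x ^ 2 + y ^ 2) ≤ √(a ^ 2 + b ^ 2) := by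
  have hx := abs_le_sqrt_sq_add_sq x y
  have hxy := sqrt_sq_add_sq_le_abs_add_abs x y
  calc (s ^ 4 - 10 * s ^ 3) * √(x ^ 2 + y ^ 2)
      = s ^ 4 * √(x ^ 2 + y ^ 2) - 10 * s ^ 3 * √(x ^ 2 + y ^ 2) := by ring
    _ ≤ s ^ 4 * (|x| + |y|) - 10 * s ^ 3 * |x| := by gcongr
    _ ≤ |a| := by
        nlinarith [mul_le_mul_of_nonneg_left hcone (show 0 ≤ s ^ 3 + s by positivity),
          mul_nonneg (abs_nonneg x) (show 0 ≤ 6 * s ^ 3 - 4 * s - 1 by nlinarith)]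
    _ ≤ √(a ^ 2 + b ^ 2) := abs_le_sqrt_sq_add_sq a b

lemma sqrt_le_of_coord_bounds (ha : |a| ≤ (s ^ 4 + 1) * |x| + s ^ 2 * |y|)
    (hb : |b| ≤ s ^ 2 * |x| + |y|) :
    √(a ^ 2 + b ^ 2) ≤ (s ^ 4 + 10 * s ^ 3) * √(x ^ 2 + y ^ 2) := by
  have hy : |y| ≤ |x| := by nlinarith [abs_nonneg y]
  calc √(a ^ 2 + b ^ 2) ≤ |a| + |b| := sqrt_sq_add_sq_le_abs_add_abs a b
    _ ≤ (s ^ 4 + 10 * s ^ 3) * |x| := by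
        nlinarith [mul_le_mul_of_nonneg_left hcone (show 0 ≤ s by positivity),
          mul_nonneg (abs_nonneg x) (show 0 ≤ 10 * s ^ 3 - s ^ 2 - 4 * s - 2 by nlinarith)]
    _ ≤ (s ^ 4 + 10 * s ^ 3) * √(x ^ 2 + y ^ 2) := by
        gcongr; exact abs_le_sqrt_sq_add_sq x y

end ConeEstimates

theorem stmt_9_general (α : ℝ) (hα : 16 ≤ α) (e f : ℝ)
    (he : e = 1 ∨ e = -1) (hf : f = 1 ∨ f = -1)
    (A : Matrix (Fin 2) (Fin 2) ℝ) (hA : A = !![1 + e * α ^ 2, f * α; -e * α, 1])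
    (v : Fin 2 → ℝ)
    (hcone : |v 1| ≤ 4 * |v 0| / Real.sqrt α) :
    |(A.mulVec v) 1| ≤ 4 * |(A.mulVec v) 0| / Real.sqrt α ∧
    (α ^ 2 - 10 * α ^ ((3 : ℝ) / 2)) * Real.sqrt ((v 0) ^ 2 + (v 1) ^ 2)
      ≤ Real.sqrt (((A.mulVec v) 0) ^ 2 + ((A.mulVec v) 1) ^ 2) ∧
    Real.sqrt (((A.mulVec v) 0) ^ 2 + ((A.mulVec v) 1) ^ 2)
      ≤ (α ^ 2 + 10 * α ^ ((3 : ℝ) / 2)) * Real.sqrt ((v 0) ^ 2 + (v 1) ^ 2) := by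
  obtain ⟨s, hs, rfl⟩ : ∃ s, 4 ≤ s ∧ α = s ^ 2 :=
    ⟨√α, by rw [show (4 : ℝ) = √16 by norm_num]; gcongr, (sq_sqrt (by linarith)).symm⟩
  have hs0 : 0 < s := by linarith
  have hsqrt : √(s ^ 2) = s := sqrt_sq hs0.le
  have hpow : (s ^ 2) ^ ((3 : ℝ) / 2) = s ^ 3 := by
    rw [← rpow_natCast, ← rpow_mul hs0.le]; norm_num
  have he' : |e| = 1 := by rcases he with rfl | rfl <;> norm_num
  have hf' : |f| ≤ 1 := by rcases hf with rfl | rfl <;> norm_num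
  rw [hsqrt, le_div_iff₀ hs0, mul_comm] at hcone
  have ha_lower := le_abs_first_coord (v 0) (v 1) he' hf' (sq_nonneg s)
  have ha_upper := abs_first_coord_le (v 0) (v 1) he'.le hf' (sq_nonneg s)
  have hb := abs_second_coord_le (v 0) (v 1) he'.le (sq_nonneg s)
  simp only [hA, hsqrt, hpow, Matrix.cons_mulVec, Matrix.cons_dotProduct,
    Matrix.dotProduct_of_isEmpty, Matrix.empty_mulVec, Matrix.cons_val_zero, Matrix.cons_val_one,
    Matrix.cons_val_fin_one, neg_mul, one_mul, add_zero]
  simp only [← pow_mul, Nat.reduceMul] at ha_lower ha_upper ⊢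
  exact ⟨(le_div_iff₀' hs0).mpr (mul_abs_le_of_coord_bounds hs hcone ha_lower hb),
    le_sqrt_of_coord_bounds hs hcone ha_lower, sqrt_le_of_coord_bounds hs hcone ha_upper hb⟩

/-- Unstable-cone invariance with two-sided expansion: for `α ≥ 16`, each derivative
matrix `A = [[1±α², ±α],[∓α, 1]]` of the sawtooth map maps the unstable cone
`C_u = {|y| ≤ 4|x|/√α}` into itself with
`(α² - 10α^{3/2})|v| ≤ |Av| ≤ (α² + 10α^{3/2})|v|`. -/
theorem stmt_9 (α : ℝ) (hα : 16 ≤ α) (e f : ℝ)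
    (he : e = 1 ∨ e = -1) (hf : f = 1 ∨ f = -1)
    (A : Matrix (Fin 2) (Fin 2) ℝ) (hA : A = !![1 + e * α ^ 2, f * α; -e * α, 1])
    (v : Fin 2 → ℝ) (hv : v ≠ 0)
    (hcone : |v 1| ≤ 4 * |v 0| / Real.sqrt α) :
    |(A.mulVec v) 1| ≤ 4 * |(A.mulVec v) 0| / Real.sqrt α ∧
    (α ^ 2 - 10 * α ^ ((3 : ℝ) / 2)) * Real.sqrt ((v 0) ^ 2 + (v 1) ^ 2)
      ≤ Real.sqrt (((A.mulVec v) 0) ^ 2 + ((A.mulVec v) 1) ^ 2) ∧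
    Real.sqrt (((A.mulVec v) 0) ^ 2 + ((A.mulVec v) 1) ^ 2)
      ≤ (α ^ 2 + 10 * α ^ ((3 : ℝ) / 2)) * Real.sqrt ((v 0) ^ 2 + (v 1) ^ 2) :=
  stmt_9_general α hα e f he hf A hA v hcone
end

section
/- Let (A_i)_{i} be a finite family of 2×2 real matrices with common invariant cones: each A_i maps a closed cone C_s into itself with |A_i v| ≥ μ|v| for v ∈ C_s, and each A_i^{-1} maps a closed cone C_u (with C_s ∩ C_u = {0}) into itself, where μ = α²/2 > 1. Suppose additionally (α²-10α^{3/2})|v| ≤ |A_i v| ≤ (α²+10α^{3/2})|v| for v ∈ C_s. Let σ, σ' ∈ {1,...,4}^n be words differing in exactly one entry, and write A_σ = A_{σ_{n-1}}···A_{σ_0}. Then there is a constant C₀ independent of n and α (for α large) such that |A_σ v|/|A_{σ'} v| ≤ C₀ for every nonzero v ∈ C_s. -/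
/-- Euclidean norm on ℝ². -/
noncomputable def nrm2 (v : Fin 2 → ℝ) : ℝ := Real.sqrt ((v 0) ^ 2 + (v 1) ^ 2)

/-! The cones `C_s`, `C_u` are `stableCone c`, `unstableCone c` with `c = 4 / √α`. The common
tail `M` of the two words maps `C_s` into itself and `M⁻¹` maps `C_u` into itself, so the
projective action of `M⁻¹` on the slopes `[-c, c]` has a fixed point: `M` has an invariant
line of slope `s`, `|s| ≤ c`. The linear form `ℓ z = z 1 - s * z 0` vanishing on it satisfies
`ℓ ∘ M = μ ℓ`, and `|ℓ z|` is within a factor `2` of `|z|` on `C_s`. So `M` stretches every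
vector of `C_s` by `|μ|` up to a factor `4`, independently of the length of the word, while
the differing letter changes the norm of the intermediate vector by at most a factor `2`
once `α ≥ 900`. -/

open Set Matrix

lemma nrm2_nonneg (v : Fin 2 → ℝ) : 0 ≤ nrm2 v := Real.sqrt_nonneg _

lemma abs_le_nrm2 (v : Fin 2 → ℝ) (i : Fin 2) : |v i| ≤ nrm2 v := by
  apply Real.abs_le_sqrt
  fin_cases i <;> simp <;> positivity

lemma nrm2_le_abs_add_abs (v : Fin 2 → ℝ) : nrm2 v ≤ |v 0| + |v 1| := by
  refine Real.sqrt_le_iff.mpr ⟨by positivity, ?_⟩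
  nlinarith [sq_abs (v 0), sq_abs (v 1), abs_nonneg (v 0), abs_nonneg (v 1)]

def stableCone (c : ℝ) : Set (Fin 2 → ℝ) := {v | |v 0| ≤ c * |v 1|}

def unstableCone (c : ℝ) : Set (Fin 2 → ℝ) := {v | |v 1| ≤ c * |v 0|}

def coneHyperbolic (c : ℝ) : Submonoid (Matrix (Fin 2) (Fin 2) ℝ) where
  carrier := {M | IsUnit M.det ∧ MapsTo (M *ᵥ ·) (stableCone c) (stableCone c) ∧
    MapsTo (M⁻¹ *ᵥ ·) (unstableCone c) (unstableCone c)}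
  mul_mem' := by
    rintro M N ⟨hM, hMs, hMu⟩ ⟨hN, hNs, hNu⟩
    refine ⟨by rw [det_mul]; exact hM.mul hN, ?_, ?_⟩
    · intro v hv
      simpa only [mulVec_mulVec] using hMs (hNs hv)
    · intro v hv
      simpa only [Matrix.mul_inv_rev, mulVec_mulVec] using hNu (hMu hv)
  one_mem' := ⟨by simp, fun v hv => by simpa using hv, fun v hv => by simpa using hv⟩

lemma eq_zero_of_mem_unstableCone {c : ℝ} {v : Fin 2 → ℝ} (hv : v ∈ unstableCone c)
    (h0 : v 0 = 0) : v = 0 := by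
  have h1 : v 1 = 0 := by simpa [unstableCone, h0] using hv
  ext i; fin_cases i <;> simp [h0, h1]

lemma exists_eigenline_mem_unstableCone {c : ℝ} (hc : 0 ≤ c) {M : Matrix (Fin 2) (Fin 2) ℝ}
    (hdet : IsUnit M.det) (hM : MapsTo (M⁻¹ *ᵥ ·) (unstableCone c) (unstableCone c)) :
    ∃ s, |s| ≤ c ∧ (M *ᵥ ![1, s]) 1 = s * (M *ᵥ ![1, s]) 0 := by
  set y : ℝ → Fin 2 → ℝ := fun u => M⁻¹ *ᵥ ![1, u]
  have hy : ∀ u ∈ Icc (-c) c, y u ∈ unstableCone c := fun u hu =>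
    hM (by simpa [unstableCone] using abs_le.mpr hu)
  have hy0 : ∀ u ∈ Icc (-c) c, y u 0 ≠ 0 := by
    intro u hu h0
    have h := congrArg (M *ᵥ ·) (eq_zero_of_mem_unstableCone (hy u hu) h0)
    simp only [y, mulVec_mulVec, mul_nonsing_inv M hdet, one_mulVec, mulVec_zero] at h
    simpa using congrFun h 0
  have hcont : ContinuousOn (fun u => y u 1 / y u 0) (Icc (-c) c) := by
    refine ContinuousOn.div ?_ ?_ hy0 <;> fun_prop
  have hmaps : MapsTo (fun u => y u 1 / y u 0) (Icc (-c) c) (Icc (-c) c) := by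
    intro u hu
    rw [mem_Icc, ← abs_le, abs_div, div_le_iff₀ (abs_pos.mpr (hy0 u hu))]
    exact hy u hu
  obtain ⟨s, hs, hfix⟩ := exists_mem_Icc_isFixedPt_of_mapsTo hcont (by linarith) hmaps
  refine ⟨s, abs_le.mpr hs, ?_⟩
  have hyline : y s = y s 0 • ![1, s] := by
    have h1 : y s 1 = y s 0 * s := by
      rw [mul_comm]; exact (div_eq_iff (hy0 s hs)).mp hfix
    ext i; fin_cases i <;> simp [h1]
  have hline : ![1, s] = y s 0 • (M *ᵥ ![1, s]) := by
    have h := congrArg (M *ᵥ ·) hyline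
    simp only [y, mulVec_mulVec, mul_nonsing_inv M hdet, one_mulVec, mulVec_smul] at h
    exact h
  set m := M *ᵥ ![1, s]
  have e0 : 1 = y s 0 * m 0 := by simpa using congrFun hline 0
  have e1 : s = y s 0 * m 1 := by simpa using congrFun hline 1
  linear_combination m 1 * e0 - m 0 * e1

def transverseCoord (s : ℝ) (z : Fin 2 → ℝ) : ℝ := z 1 - s * z 0

lemma abs_transverseCoord_le {s : ℝ} (hs : |s| ≤ 1) (z : Fin 2 → ℝ) :
    |transverseCoord s z| ≤ 2 * nrm2 z := by
  have h0 := abs_le_nrm2 z 0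
  have h1 := abs_le_nrm2 z 1
  calc |z 1 - s * z 0| ≤ |z 1| + |s| * |z 0| := by simpa [abs_mul] using abs_sub (z 1) (s * z 0)
    _ ≤ nrm2 z + 1 * nrm2 z := by gcongr
    _ = 2 * nrm2 z := by ring

lemma nrm2_le_two_mul_abs_transverseCoord {c s : ℝ} (hc : c ≤ 1 / 2) (hs : |s| ≤ c)
    {z : Fin 2 → ℝ} (hz : z ∈ stableCone c) : nrm2 z ≤ 2 * |transverseCoord s z| := by
  have hz : |z 0| ≤ c * |z 1| := hz
  have hc0 : 0 ≤ c := (abs_nonneg s).trans hs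
  have hsz : |s| * |z 0| ≤ c * (c * |z 1|) := by gcongr
  have hlow : |z 1| - |s| * |z 0| ≤ |transverseCoord s z| := by
    simpa [transverseCoord, abs_mul] using abs_sub_abs_le_abs_sub (z 1) (s * z 0)
  have hgap : 0 ≤ (1 - 2 * c) * (1 + c) * |z 1| := by
    have : 0 ≤ 1 - 2 * c := by linarith
    positivity
  nlinarith [nrm2_le_abs_add_abs z]

lemma transverseCoord_mulVec {s : ℝ} {M : Matrix (Fin 2) (Fin 2) ℝ}
    (hM : transverseCoord s (M *ᵥ ![1, s]) = 0) (z : Fin 2 → ℝ) :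
    transverseCoord s (M *ᵥ z) = transverseCoord s (M *ᵥ Pi.single 1 1) * transverseCoord s z := by
  simp [transverseCoord, mulVec, dotProduct, Fin.sum_univ_two] at hM ⊢
  linear_combination z 0 * hM

lemma nrm2_mulVec_le_of_mem_coneHyperbolic {c K : ℝ} (hc0 : 0 ≤ c) (hc : c ≤ 1 / 2) (hK : 0 ≤ K)
    {M : Matrix (Fin 2) (Fin 2) ℝ} (hM : M ∈ coneHyperbolic c) {w w' : Fin 2 → ℝ}
    (hw : w ∈ stableCone c) (hw' : w' ∈ stableCone c) (hww' : nrm2 w ≤ K * nrm2 w') :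
    nrm2 (M *ᵥ w) ≤ 16 * K * nrm2 (M *ᵥ w') := by
  obtain ⟨hdet, hMs, hMu⟩ := hM
  obtain ⟨s, hs, hline⟩ := exists_eigenline_mem_unstableCone hc0 hdet hMu
  have hℓ := transverseCoord_mulVec (s := s) (M := M) (by simp [transverseCoord, hline])
  set μ := transverseCoord s (M *ᵥ Pi.single 1 1)
  have hs1 : |s| ≤ 1 := by linarith
  calc nrm2 (M *ᵥ w) ≤ 2 * |transverseCoord s (M *ᵥ w)| :=
        nrm2_le_two_mul_abs_transverseCoord hc hs (hMs hw)
    _ = 2 * |μ| * |transverseCoord s w| := by rw [hℓ, abs_mul, mul_assoc]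
    _ ≤ 2 * |μ| * (2 * (K * nrm2 w')) := by
        gcongr; exact (abs_transverseCoord_le hs1 w).trans (by gcongr)
    _ ≤ 2 * |μ| * (2 * (K * (2 * |transverseCoord s w'|))) := by
        gcongr; exact nrm2_le_two_mul_abs_transverseCoord hc hs hw'
    _ = 8 * K * |transverseCoord s (M *ᵥ w')| := by rw [hℓ, abs_mul]; ring
    _ ≤ 8 * K * (2 * nrm2 (M *ᵥ w')) := by gcongr; exact abs_transverseCoord_le hs1 _
    _ = 16 * K * nrm2 (M *ᵥ w') := by ring

lemma reverse_prod_mem_coneHyperbolic {c : ℝ} {L : List (Matrix (Fin 2) (Fin 2) ℝ)}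
    (hL : ∀ M ∈ L, M ∈ coneHyperbolic c) : L.reverse.prod ∈ coneHyperbolic c :=
  Submonoid.list_prod_mem _ fun M hM => hL M (List.mem_reverse.mp hM)

lemma nrm2_reverse_prod_append_cons_le {c K : ℝ} (hc0 : 0 ≤ c) (hc : c ≤ 1 / 2) (hK : 0 ≤ K)
    {P S : List (Matrix (Fin 2) (Fin 2) ℝ)} {B B' : Matrix (Fin 2) (Fin 2) ℝ}
    (hL : ∀ M ∈ P ++ B :: S, M ∈ coneHyperbolic c)
    (hB' : MapsTo (B' *ᵥ ·) (stableCone c) (stableCone c))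
    (hBB' : ∀ w ∈ stableCone c, nrm2 (B *ᵥ w) ≤ K * nrm2 (B' *ᵥ w))
    {v : Fin 2 → ℝ} (hv : v ∈ stableCone c) :
    nrm2 ((P ++ B :: S).reverse.prod *ᵥ v) ≤ 16 * K * nrm2 ((P ++ B' :: S).reverse.prod *ᵥ v) := by
  have hsplit : ∀ X, (P ++ X :: S).reverse.prod *ᵥ v =
      S.reverse.prod *ᵥ X *ᵥ P.reverse.prod *ᵥ v := by
    intro X
    simp only [List.reverse_append, List.reverse_cons, List.prod_append, List.prod_cons,
      List.prod_nil, mul_one, mulVec_mulVec, mul_assoc]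
  have hP := reverse_prod_mem_coneHyperbolic (c := c) (L := P) (fun M hM => hL M (by simp [hM]))
  have hS := reverse_prod_mem_coneHyperbolic (c := c) (L := S) (fun M hM => hL M (by simp [hM]))
  have hB : B ∈ coneHyperbolic c := hL B (by simp)
  have hu := hP.2.1 hv
  rw [hsplit, hsplit]
  exact nrm2_mulVec_le_of_mem_coneHyperbolic hc0 hc hK hS (hB.2.1 hu) (hB' hu) (hBB' _ hu)

lemma List.exists_ofFn_eq_append_cons {α : Type*} {n : ℕ} {f g : Fin n → α} {k : Fin n}
    (hfg : ∀ j, j ≠ k → f j = g j) :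
    ∃ P S, List.ofFn f = P ++ f k :: S ∧ List.ofFn g = P ++ g k :: S := by
  have hk : (k : ℕ) < (List.ofFn f).length := by simp
  refine ⟨(List.ofFn f).take k, (List.ofFn f).drop (k + 1), ?_, ?_⟩
  · rw [← List.getElem_ofFn (f := f) (i := k) hk, List.getElem_cons_drop, List.take_append_drop]
  · have hset : List.ofFn g = (List.ofFn f).set k (g k) := by
      refine List.ext_getElem (by simp) fun i hi _ => ?_
      rw [List.getElem_set, List.getElem_ofFn, List.getElem_ofFn]
      split_ifs with h
      · subst h; rfl
      · exact (hfg _ fun h' => h (by simp [← h'])).symm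
    rw [hset, List.set_eq_take_append_cons_drop, if_pos hk]

lemma thirty_mul_rpow_three_halves_le_sq {α : ℝ} (hα : 900 ≤ α) :
    30 * α ^ ((3 : ℝ) / 2) ≤ α ^ 2 := by
  have hsqrt : 30 ≤ √α := Real.le_sqrt_of_sq_le (by linarith)
  have hpow : α ^ ((3 : ℝ) / 2) = α * √α := by
    rw [show (3 : ℝ) / 2 = 1 + 1 / 2 by norm_num, Real.rpow_add (by linarith), Real.rpow_one,
      ← Real.sqrt_eq_rpow]
  calc 30 * α ^ ((3 : ℝ) / 2) ≤ √α * (α * √α) := by rw [hpow]; gcongr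
    _ = α ^ 2 := by rw [mul_left_comm, Real.mul_self_sqrt (by linarith), sq]

/-- Equivalence of expansion: for a finite family of 2×2 matrices sharing the invariant
cones `C_s = {|x| ≤ 4|y|/√α}` (mapped into itself with expansion `μ = α²/2` and two-sided
bounds `α² ∓ 10α^{3/2}`) and `C_u = {|y| ≤ 4|x|/√α}` (invariant for the inverses), there
is a constant `C₀` independent of `n` and `α` (for `α` large) such that products
`A_σ = A_{σ_{n-1}}⋯A_{σ_0}` along words differing in at most one entry satisfy
`|A_σ v| ≤ C₀ |A_{σ'} v|` on the stable cone. -/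
theorem stmt_10 :
    ∃ C₀ : ℝ, 0 < C₀ ∧ ∃ α₀ : ℝ, ∀ α : ℝ, α₀ ≤ α →
    ∀ (ι : Type) [Finite ι] (A : ι → Matrix (Fin 2) (Fin 2) ℝ),
    (∀ i, (A i).det ≠ 0) →
    (∀ i (v : Fin 2 → ℝ), |v 0| ≤ 4 * |v 1| / Real.sqrt α →
        |((A i).mulVec v) 0| ≤ 4 * |((A i).mulVec v) 1| / Real.sqrt α ∧
        α ^ 2 / 2 * nrm2 v ≤ nrm2 ((A i).mulVec v) ∧
        (α ^ 2 - 10 * α ^ ((3 : ℝ) / 2)) * nrm2 v ≤ nrm2 ((A i).mulVec v) ∧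
        nrm2 ((A i).mulVec v) ≤ (α ^ 2 + 10 * α ^ ((3 : ℝ) / 2)) * nrm2 v) →
    (∀ i (v : Fin 2 → ℝ), |v 1| ≤ 4 * |v 0| / Real.sqrt α →
        |((A i)⁻¹.mulVec v) 1| ≤ 4 * |((A i)⁻¹.mulVec v) 0| / Real.sqrt α) →
    ∀ (n : ℕ) (σ σ' : Fin n → ι) (k : Fin n),
      (∀ j : Fin n, j ≠ k → σ j = σ' j) →
      ∀ v : Fin 2 → ℝ, v ≠ 0 → |v 0| ≤ 4 * |v 1| / Real.sqrt α →
      nrm2 (((List.ofFn fun j => A (σ j)).reverse.prod).mulVec v)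
        ≤ C₀ * nrm2 (((List.ofFn fun j => A (σ' j)).reverse.prod).mulVec v) := by
  refine ⟨32, by norm_num, 900, fun α hα ι _ A hdet hs hu n σ σ' k hk v _ hv => ?_⟩
  set c := 4 / √α
  have hsqrt : 30 ≤ √α := Real.le_sqrt_of_sq_le (by linarith)
  have hc0 : 0 ≤ c := by positivity
  have hc : c ≤ 1 / 2 := by rw [div_le_iff₀ (by linarith)]; linarith
  simp only [mul_div_right_comm (4 : ℝ)] at hs hu hv
  have hA : ∀ i, A i ∈ coneHyperbolic c := fun i =>
    ⟨isUnit_iff_ne_zero.mpr (hdet i), fun w hw => (hs i w hw).1, hu i⟩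
  have hstep : ∀ i i', ∀ w ∈ stableCone c, nrm2 (A i *ᵥ w) ≤ 2 * nrm2 (A i' *ᵥ w) := by
    intro i i' w hw
    have := mul_le_mul_of_nonneg_right (thirty_mul_rpow_three_halves_le_sq hα) (nrm2_nonneg w)
    nlinarith [(hs i w hw).2.2.2, (hs i' w hw).2.2.1]
  obtain ⟨P, S, hσ, hσ'⟩ := List.exists_ofFn_eq_append_cons (f := fun j => A (σ j))
    (g := fun j => A (σ' j)) fun j hj => congrArg A (hk j hj)
  have hL : ∀ M ∈ P ++ A (σ k) :: S, M ∈ coneHyperbolic c :=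
    hσ ▸ List.forall_mem_ofFn_iff.mpr fun j => hA (σ j)
  rw [hσ, hσ', show (32 : ℝ) = 16 * 2 by norm_num]
  exact nrm2_reverse_prod_append_cons_le hc0 hc zero_le_two hL (hA (σ' k)).2.1
    (hstep (σ k) (σ' k)) hv
end

section
/- Suppose ‖L f‖_s ≤ C(α^{-2β}‖f‖_s + |f|_w), ‖L f‖_u ≤ C(α^{-p}‖f‖_u + ‖f‖_s), |f|_w ≤ C‖f‖_s, and |L f|_w ≤ Cα^{-p}(‖f‖_s + ‖f‖_u) for all f in a vector space V, where L: V → V is linear, ‖·‖_s, ‖·‖_u, |·|_w are seminorms, α > 1, and β, p > 0. Let r = min(2β,p)/2 and q = r/3. Then there exists α₀ (depending only on C, β, p) such that for all α ≥ α₀: (i) ⦀L³f⦀ ≤ α^{-r}⦀f⦀ where ⦀f⦀ = ‖f‖_s + ‖f‖_u; (ii) for every n ≥ 1, ⦀Lⁿf⦀ ≤ C' α^{2r/3} α^{-qn} ⦀f⦀; and (iii) |Lⁿf|_w ≤ C'' α^{-qn} ⦀f⦀. -/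
/-!
Write `N = Ns + Nu` for the strong norm and `t = α^{-r}`, so that both contraction factors
`α^{-2β}` and `α^{-p}` are at most `t²`. Along three steps of `L` each of `Ns` and `Nu` passes
at least once through a factor `t²`: the stable part of `L² f` is controlled by `α^{-2β}` and by
the weak norm of `L f`, which gains `α^{-p}`; the unstable part of `L³ f` gains `α^{-p}` from the
unstable inequality and is otherwise fed by the stable part of `L² f`. Hence
`N (L³ f) ≤ K(C) t² N f ≤ t N f` once `α^r ≥ K(C)`. Writing `n = 3m + k` with `k ≤ 2` and using
the crude one-step bound `N (L f) ≤ (C + 1)² N f` for the remaining `k` steps gives (ii), and one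
more application of the weak inequality gives (iii).
-/

open Function

theorem rpow_neg_pow_div_le {α r : ℝ} (hα : 1 ≤ α) (hr : 0 ≤ r) {k : ℕ} (hk : 0 < k)
    (n : ℕ) : (α ^ (-r)) ^ (n / k) ≤ α ^ (r / k * (k - 1)) * α ^ (-(r / k * n)) := by
  have hk' : (0 : ℝ) < k := by exact_mod_cast hk
  have hn : ((n % k : ℕ) : ℝ) + k * (n / k : ℕ) = n := by exact_mod_cast Nat.mod_add_div n k
  have hmod : ((n % k : ℕ) : ℝ) + 1 ≤ k := by exact_mod_cast Nat.mod_lt n hk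
  rw [← Real.rpow_mul_natCast (by linarith), ← Real.rpow_add (by linarith)]
  apply Real.rpow_le_rpow_of_exponent_le hα
  rw [← hn, mul_add, ← mul_assoc, div_mul_cancel₀ r hk'.ne']
  have : 0 ≤ r / k * (k - 1 - (n % k : ℕ)) := by
    apply mul_nonneg (by positivity); linarith
  linarith

theorem rpow_neg_le_sq_rpow_neg {α r x : ℝ} (hα : 1 ≤ α) (h : 2 * r ≤ x) :
    α ^ (-x) ≤ (α ^ (-r)) ^ 2 := by
  rw [← Real.rpow_mul_natCast (by linarith)]
  exact Real.rpow_le_rpow_of_exponent_le hα (by push_cast; linarith)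

theorem mul_rpow_neg_le_one {α r K : ℝ} (hK : 0 ≤ K) (hr : 0 < r) (hα : K ^ r⁻¹ ≤ α) :
    K * α ^ (-r) ≤ 1 := by
  have hα₀ : 0 ≤ α := (Real.rpow_nonneg hK _).trans hα
  have hKα : K ≤ α ^ r := by
    calc K = (K ^ r⁻¹) ^ r := (Real.rpow_inv_rpow hK hr.ne').symm
      _ ≤ α ^ r := Real.rpow_le_rpow (Real.rpow_nonneg hK _) hα hr.le
  rw [Real.rpow_neg hα₀]
  exact mul_inv_le_one_of_le₀ hKα (hK.trans hKα)

/-- The hypotheses of the iteration scheme; `a` and `b` stand for `α^{-2β}` and `α^{-p}`. -/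
structure IsLasotaYorke {V : Type*} (L : V → V) (Ns Nu Nw : V → ℝ) (C a b : ℝ) : Prop where
  nonneg_s : ∀ g, 0 ≤ Ns g
  nonneg_u : ∀ g, 0 ≤ Nu g
  stable : ∀ g, Ns (L g) ≤ C * (a * Ns g + Nw g)
  unstable : ∀ g, Nu (L g) ≤ C * (b * Nu g + Ns g)
  weak_le : ∀ g, Nw g ≤ C * Ns g
  weak_apply : ∀ g, Nw (L g) ≤ C * b * (Ns g + Nu g)

namespace IsLasotaYorke

variable {V : Type*} {L : V → V} {Ns Nu Nw : V → ℝ} {C a b s : ℝ}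

theorem stable_apply_le (h : IsLasotaYorke L Ns Nu Nw C a b) (hC : 0 ≤ C) (ha : a ≤ 1)
    (g : V) : Ns (L g) ≤ C * (C + 1) * Ns g := by
  have hNs := h.nonneg_s g
  calc Ns (L g) ≤ C * (a * Ns g + Nw g) := h.stable g
    _ ≤ C * (1 * Ns g + C * Ns g) := by gcongr; exact h.weak_le g
    _ = C * (C + 1) * Ns g := by ring

theorem unstable_apply_le (h : IsLasotaYorke L Ns Nu Nw C a b) (hC : 0 ≤ C) (hb : b ≤ 1)
    (g : V) : Nu (L g) ≤ C * (Ns g + Nu g) := by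
  have hNu := h.nonneg_u g
  calc Nu (L g) ≤ C * (b * Nu g + Ns g) := h.unstable g
    _ ≤ C * (1 * Nu g + Ns g) := by gcongr
    _ = C * (Ns g + Nu g) := by ring

theorem strong_apply_le (h : IsLasotaYorke L Ns Nu Nw C a b) (hC : 0 ≤ C) (ha : a ≤ 1)
    (hb : b ≤ 1) (g : V) : Ns (L g) + Nu (L g) ≤ C * (C + 2) * (Ns g + Nu g) := by
  have hNu : 0 ≤ C * (C + 1) * Nu g := by have := h.nonneg_u g; positivity
  linarith [h.stable_apply_le hC ha g, h.unstable_apply_le hC hb g]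

theorem weak_apply_le (h : IsLasotaYorke L Ns Nu Nw C a b) (hC : 0 ≤ C) (hb : b ≤ s)
    (g : V) : Nw (L g) ≤ C * s * (Ns g + Nu g) := by
  have hN : 0 ≤ Ns g + Nu g := add_nonneg (h.nonneg_s g) (h.nonneg_u g)
  calc Nw (L g) ≤ C * b * (Ns g + Nu g) := h.weak_apply g
    _ ≤ C * s * (Ns g + Nu g) := by gcongr

theorem stable_apply_apply_le (h : IsLasotaYorke L Ns Nu Nw C a b) (hC : 0 ≤ C)
    (hs₀ : 0 ≤ s) (hs₁ : s ≤ 1) (ha : a ≤ s) (hb : b ≤ s) (g : V) :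
    Ns (L (L g)) ≤ C ^ 2 * (C + 2) * s * (Ns g + Nu g) := by
  have hNu : 0 ≤ C ^ 2 * (C + 1) * s * Nu g := by have := h.nonneg_u g; positivity
  calc Ns (L (L g)) ≤ C * (a * Ns (L g) + Nw (L g)) := h.stable _
    _ ≤ C * (s * (C * (C + 1) * Ns g) + C * s * (Ns g + Nu g)) := by
        gcongr C * (?_ + ?_)
        · exact mul_le_mul ha (h.stable_apply_le hC (ha.trans hs₁) g) (h.nonneg_s _) hs₀
        · exact h.weak_apply_le hC hb g
    _ = C ^ 2 * (C + 2) * s * (Ns g + Nu g) - C ^ 2 * (C + 1) * s * Nu g := by ring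
    _ ≤ C ^ 2 * (C + 2) * s * (Ns g + Nu g) := sub_le_self _ hNu

theorem strong_iterate_three_le (h : IsLasotaYorke L Ns Nu Nw C a b) (hC : 0 ≤ C)
    (hs₀ : 0 ≤ s) (hs₁ : s ≤ 1) (ha : a ≤ s) (hb : b ≤ s) (g : V) :
    Ns (L^[3] g) + Nu (L^[3] g) ≤ 4 * C ^ 3 * (C + 2) * s * (Ns g + Nu g) := by
  have ha₁ := ha.trans hs₁
  have hb₁ := hb.trans hs₁
  have hN : 0 ≤ Ns g + Nu g := add_nonneg (h.nonneg_s g) (h.nonneg_u g)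
  have hN₁ := h.strong_apply_le hC ha₁ hb₁ g
  have hs₂ := h.stable_apply_apply_le hC hs₀ hs₁ ha hb g
  have hw₂ : Nw (L (L g)) ≤ C ^ 2 * (C + 2) * s * (Ns g + Nu g) := by
    calc Nw (L (L g)) ≤ C * s * (Ns (L g) + Nu (L g)) := h.weak_apply_le hC hb _
      _ ≤ C * s * (C * (C + 2) * (Ns g + Nu g)) := by gcongr
      _ = C ^ 2 * (C + 2) * s * (Ns g + Nu g) := by ring
  have hu₂ : Nu (L (L g)) ≤ C ^ 2 * (C + 2) * (Ns g + Nu g) := by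
    calc Nu (L (L g)) ≤ C * (Ns (L g) + Nu (L g)) := h.unstable_apply_le hC hb₁ _
      _ ≤ C * (C * (C + 2) * (Ns g + Nu g)) := by gcongr
      _ = C ^ 2 * (C + 2) * (Ns g + Nu g) := by ring
  have hs₃ : Ns (L (L (L g))) ≤ 2 * C ^ 3 * (C + 2) * s * (Ns g + Nu g) :=
    calc Ns (L (L (L g))) ≤ C * (a * Ns (L (L g)) + Nw (L (L g))) := h.stable _
      _ ≤ C * (1 * (C ^ 2 * (C + 2) * s * (Ns g + Nu g))
            + C ^ 2 * (C + 2) * s * (Ns g + Nu g)) := by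
          gcongr C * (?_ + ?_)
          exact mul_le_mul ha₁ hs₂ (h.nonneg_s _) zero_le_one
      _ = 2 * C ^ 3 * (C + 2) * s * (Ns g + Nu g) := by ring
  have hu₃ : Nu (L (L (L g))) ≤ 2 * C ^ 3 * (C + 2) * s * (Ns g + Nu g) :=
    calc Nu (L (L (L g))) ≤ C * (b * Nu (L (L g)) + Ns (L (L g))) := h.unstable _
      _ ≤ C * (s * (C ^ 2 * (C + 2) * (Ns g + Nu g))
            + C ^ 2 * (C + 2) * s * (Ns g + Nu g)) := by
          gcongr C * (?_ + ?_)
          exact mul_le_mul hb hu₂ (h.nonneg_u _) hs₀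
      _ = 2 * C ^ 3 * (C + 2) * s * (Ns g + Nu g) := by ring
  calc Ns (L^[3] g) + Nu (L^[3] g) = Ns (L (L (L g))) + Nu (L (L (L g))) := rfl
    _ ≤ 4 * C ^ 3 * (C + 2) * s * (Ns g + Nu g) := by linarith

theorem strong_iterate_three_le_rpow_neg {α r x y : ℝ}
    (h : IsLasotaYorke L Ns Nu Nw C (α ^ (-x)) (α ^ (-y))) (hC : 0 ≤ C) (hα : 1 ≤ α)
    (hr : 0 < r) (hx : 2 * r ≤ x) (hy : 2 * r ≤ y) (hα₀ : (4 * C ^ 3 * (C + 2)) ^ r⁻¹ ≤ α)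
    (g : V) : Ns (L^[3] g) + Nu (L^[3] g) ≤ α ^ (-r) * (Ns g + Nu g) := by
  have ht : 0 ≤ α ^ (-r) := by positivity
  have hN : 0 ≤ α ^ (-r) * (Ns g + Nu g) :=
    mul_nonneg ht (add_nonneg (h.nonneg_s g) (h.nonneg_u g))
  have ht₁ : (α ^ (-r)) ^ 2 ≤ 1 :=
    pow_le_one₀ ht (Real.rpow_le_one_of_one_le_of_nonpos hα (by linarith))
  calc Ns (L^[3] g) + Nu (L^[3] g) ≤ 4 * C ^ 3 * (C + 2) * (α ^ (-r)) ^ 2 * (Ns g + Nu g) :=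
        h.strong_iterate_three_le hC (by positivity) ht₁ (rpow_neg_le_sq_rpow_neg hα hx)
          (rpow_neg_le_sq_rpow_neg hα hy) g
    _ = 4 * C ^ 3 * (C + 2) * α ^ (-r) * (α ^ (-r) * (Ns g + Nu g)) := by ring
    _ ≤ 1 * (α ^ (-r) * (Ns g + Nu g)) := by
        gcongr; exact mul_rpow_neg_le_one (by positivity) hr hα₀
    _ = α ^ (-r) * (Ns g + Nu g) := one_mul _

end IsLasotaYorke

section Iteration

variable {V : Type*} {N : V → ℝ}

theorem iterate_le_pow_mul {F : V → V} {c : ℝ} (hc : 0 ≤ c) (hF : ∀ g, N (F g) ≤ c * N g)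
    (m : ℕ) (g : V) : N (F^[m] g) ≤ c ^ m * N g := by
  induction m with
  | zero => simp
  | succ m ih =>
    rw [iterate_succ_apply', pow_succ']
    calc N (F (F^[m] g)) ≤ c * N (F^[m] g) := hF _
      _ ≤ c * (c ^ m * N g) := mul_le_mul_of_nonneg_left ih hc
      _ = c * c ^ m * N g := by ring

theorem iterate_le_pow_mod_mul_pow_div {L : V → V} {B θ : ℝ} {k : ℕ} (hB : 0 ≤ B)
    (hθ : 0 ≤ θ) (hL : ∀ g, N (L g) ≤ B * N g) (hLk : ∀ g, N (L^[k] g) ≤ θ * N g)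
    (n : ℕ) (g : V) : N (L^[n] g) ≤ B ^ (n % k) * θ ^ (n / k) * N g := by
  have hsplit : L^[n] g = L^[n % k] ((L^[k])^[n / k] g) := by
    rw [← iterate_mul, ← iterate_add_apply, Nat.mod_add_div]
  rw [hsplit, mul_assoc]
  calc N (L^[n % k] ((L^[k])^[n / k] g)) ≤ B ^ (n % k) * N ((L^[k])^[n / k] g) :=
        iterate_le_pow_mul hB hL _ _
    _ ≤ B ^ (n % k) * (θ ^ (n / k) * N g) :=
        mul_le_mul_of_nonneg_left (iterate_le_pow_mul hθ hLk _ _) (pow_nonneg hB _)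

theorem iterate_le_rpow_of_iterate_le_rpow_neg {L : V → V} {B α r : ℝ} {k : ℕ} (hk : 0 < k)
    (hB : 1 ≤ B) (hα : 1 ≤ α) (hr : 0 ≤ r) (hN : ∀ g, 0 ≤ N g)
    (hL : ∀ g, N (L g) ≤ B * N g) (hLk : ∀ g, N (L^[k] g) ≤ α ^ (-r) * N g) (n : ℕ) (g : V) :
    N (L^[n] g) ≤ B ^ (k - 1) * α ^ (r / k * (k - 1)) * α ^ (-(r / k * n)) * N g := by
  have hmod : B ^ (n % k) ≤ B ^ (k - 1) :=
    pow_le_pow_right₀ hB (Nat.le_sub_one_of_lt (Nat.mod_lt n hk))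
  have := hN g
  calc N (L^[n] g) ≤ B ^ (n % k) * (α ^ (-r)) ^ (n / k) * N g :=
        iterate_le_pow_mod_mul_pow_div (by linarith) (by positivity) hL hLk n g
    _ ≤ B ^ (k - 1) * (α ^ (r / k * (k - 1)) * α ^ (-(r / k * n))) * N g := by
        gcongr; exact rpow_neg_pow_div_le hα hr hk n
    _ = B ^ (k - 1) * α ^ (r / k * (k - 1)) * α ^ (-(r / k * n)) * N g := by ring

theorem weak_iterate_succ_le {L : V → V} {Nw : V → ℝ} {C C' α p e q : ℝ} (hC : 0 ≤ C)
    (hC' : 0 ≤ C') (hα : 1 ≤ α) (hepq : e + q ≤ p) (hN : ∀ g, 0 ≤ N g)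
    (hW : ∀ g, Nw (L g) ≤ C * α ^ (-p) * N g)
    (hL : ∀ n : ℕ, ∀ g, N (L^[n] g) ≤ C' * α ^ e * α ^ (-(q * n)) * N g) (m : ℕ) (g : V) :
    Nw (L^[m + 1] g) ≤ C * C' * α ^ (-(q * ↑(m + 1))) * N g := by
  have hexp : α ^ (-p) * α ^ e * α ^ (-(q * m)) ≤ α ^ (-(q * ↑(m + 1))) := by
    rw [← Real.rpow_add (by linarith), ← Real.rpow_add (by linarith)]
    exact Real.rpow_le_rpow_of_exponent_le hα (by push_cast; linarith)
  have := hN g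
  calc Nw (L^[m + 1] g) = Nw (L (L^[m] g)) := by rw [iterate_succ_apply']
    _ ≤ C * α ^ (-p) * N (L^[m] g) := hW _
    _ ≤ C * α ^ (-p) * (C' * α ^ e * α ^ (-(q * m)) * N g) := by gcongr; exact hL m g
    _ = C * C' * (α ^ (-p) * α ^ e * α ^ (-(q * m))) * N g := by ring
    _ ≤ C * C' * α ^ (-(q * ↑(m + 1))) * N g := by gcongr

end Iteration

/-- Abstract iteration scheme: Lasota–Yorke-type inequalities for seminorms `Ns, Nu, Nw`
and a one-step weak-norm decay imply, for `α` large (depending only on `C, β, p`),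
(i) a three-step contraction of the strong norm `⦀f⦀ = Ns f + Nu f` by `α^{-r}` with
`r = min(2β,p)/2`, (ii) `⦀Lⁿf⦀ ≤ C' α^{2r/3} α^{-qn} ⦀f⦀` with `q = r/3`, and
(iii) `Nw(Lⁿf) ≤ C'' α^{-qn} ⦀f⦀`. -/
theorem stmt_14 (C β p : ℝ) (hC : 0 < C) (hβ : 0 < β) (hp : 0 < p) :
    ∃ α₀ C' C'' : ℝ, 0 < C' ∧ 0 < C'' ∧
    ∀ α : ℝ, α₀ ≤ α → 1 < α →
    ∀ (V : Type) (L : V → V) (Ns Nu Nw : V → ℝ),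
    (∀ g, 0 ≤ Ns g) → (∀ g, 0 ≤ Nu g) → (∀ g, 0 ≤ Nw g) →
    (∀ g, Ns (L g) ≤ C * (α ^ (-(2 * β)) * Ns g + Nw g)) →
    (∀ g, Nu (L g) ≤ C * (α ^ (-p) * Nu g + Ns g)) →
    (∀ g, Nw g ≤ C * Ns g) →
    (∀ g, Nw (L g) ≤ C * α ^ (-p) * (Ns g + Nu g)) →
    (∀ g, Ns (L^[3] g) + Nu (L^[3] g)
        ≤ α ^ (-(min (2 * β) p / 2)) * (Ns g + Nu g)) ∧
    (∀ n : ℕ, 1 ≤ n → ∀ g, Ns (L^[n] g) + Nu (L^[n] g)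
        ≤ C' * α ^ (2 * (min (2 * β) p / 2) / 3) *
            α ^ (-(min (2 * β) p / 2 / 3 * n)) * (Ns g + Nu g)) ∧
    (∀ n : ℕ, 1 ≤ n → ∀ g, Nw (L^[n] g)
        ≤ C'' * α ^ (-(min (2 * β) p / 2 / 3 * n)) * (Ns g + Nu g)) := by
  set r := min (2 * β) p / 2 with hr_def
  have hr : 0 < r := by positivity
  have hrβ : 2 * r ≤ 2 * β := by linarith [min_le_left (2 * β) p]
  have hrp : 2 * r ≤ p := by linarith [min_le_right (2 * β) p]
  refine ⟨(4 * C ^ 3 * (C + 2)) ^ r⁻¹, (C + 1) ^ 4, C * (C + 1) ^ 4, by positivity,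
    by positivity, fun α hα₀ hα V L Ns Nu Nw hNs hNu _ hS hU hW hWL => ?_⟩
  have hLY : IsLasotaYorke L Ns Nu Nw C (α ^ (-(2 * β))) (α ^ (-p)) :=
    ⟨hNs, hNu, hS, hU, hW, hWL⟩
  have hN g : 0 ≤ Ns g + Nu g := add_nonneg (hNs g) (hNu g)
  have h₁ g : Ns (L g) + Nu (L g) ≤ (C + 1) ^ 2 * (Ns g + Nu g) :=
    (hLY.strong_apply_le hC.le (Real.rpow_le_one_of_one_le_of_nonpos hα.le (by linarith))
      (Real.rpow_le_one_of_one_le_of_nonpos hα.le (by linarith)) g).trans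
      (mul_le_mul_of_nonneg_right (by nlinarith) (hN g))
  have h₃ := hLY.strong_iterate_three_le_rpow_neg hC.le hα.le hr hrβ hrp hα₀
  have hn (n : ℕ) g : Ns (L^[n] g) + Nu (L^[n] g)
      ≤ (C + 1) ^ 4 * α ^ (2 * r / 3) * α ^ (-(r / 3 * n)) * (Ns g + Nu g) := by
    have key := iterate_le_rpow_of_iterate_le_rpow_neg (N := fun g => Ns g + Nu g) three_pos
      (one_le_pow₀ (by linarith)) hα.le hr.le hN h₁ h₃ n g
    rwa [Nat.cast_ofNat, show r / 3 * (3 - 1) = 2 * r / 3 by ring, ← pow_mul] at key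
  refine ⟨h₃, fun n _ g => hn n g, fun n hn₁ g => ?_⟩
  obtain ⟨m, rfl⟩ := Nat.exists_eq_add_of_le' hn₁
  exact weak_iterate_succ_le (N := fun g => Ns g + Nu g) hC.le (by positivity) hα.le
    (by linarith) hN hWL hn m g
end
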